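/- arXiv:2412.18846 — 4 statements merged into one kernel-verified Lean document; each statement's English description precedes it below -/
import Mathlib

section
/- For every σ ∈ Gal(K(μ_{p^n})/K), if c is an integer prime to p with σ(ζ_{p^n}) = ζ_{p^n}^c and c' is an integer with c'·c^{m−1} ≡ 1 (mod p^n), then there exists y ∈ K(μ_{p^n})^× such that σ(ε^{cyc}_{m,n}) = (ε^{cyc}_{m,n})^{c'} · y^{p^n}; in other words σ(ε^{cyc}_{m,n}) ≡ (ε^{cyc}_{m,n})^{ε_cyc(σ)^{1−m}} modulo p^n-th powers in K(μ_{p^n})^×. -/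
open Complex

/-- `ζ_N = exp(2πi/N)`. -/
noncomputable def zeta (N : ℕ) : ℂ := Complex.exp (2 * Real.pi * Complex.I / N)

/-- `K(μ_N)`, the field obtained from the subfield `K ⊆ ℂ` by adjoining `ζ_N`. -/
noncomputable def Kmu (K : Subfield ℂ) (N : ℕ) : IntermediateField K ℂ :=
  IntermediateField.adjoin K {zeta N}

/-- `ζ_N` as an element of `K(μ_N)`. -/
noncomputable def zetaEl (K : Subfield ℂ) (N : ℕ) : Kmu K N :=
  ⟨zeta N, IntermediateField.subset_adjoin K {zeta N} rfl⟩

/-- The cyclotomic Soulé unit `ε^{cyc}_{m,n} = ∏_{0<a<p^n, p∤a} (1 - ζ_{p^n}^a)^{a^{m-1}}`. -/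
noncomputable def souleUnit (K : Subfield ℂ) (p m n : ℕ) : Kmu K (p ^ n) :=
  ∏ a ∈ (Finset.range (p ^ n)).filter fun a => ¬ p ∣ a,
    (1 - zetaEl K (p ^ n) ^ a) ^ (a ^ (m - 1))

/-! Writing `ζ = ζ_{p^n}` and `σ ζ = ζ^{c₀}` with `c₀ ≡ c`, the automorphism `σ` sends
`1 - ζ^a` to `1 - ζ^{c₀ a mod p^n}`, and `a ↦ c₀ a mod p^n` permutes the residues prime to `p`.
Reindexing, `σ ε` and `ε^{c'}` become products of the same factors `1 - ζ^b` with exponents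
congruent modulo `p^n`, because `c' (c₀ a)^{m-1} ≡ a^{m-1}`; such products differ by a `p^n`-th
power. -/

open Finset

section PowersModuloNthPowers

variable {G : Type*} [CommGroupWithZero G]

theorem zpow_eq_zpow_mul_pow_of_modEq {x : G} (hx : x ≠ 0) {N : ℕ} {e f : ℤ}
    (h : e ≡ f [ZMOD N]) : x ^ e = x ^ f * (x ^ ((e - f) / N)) ^ N := by
  rw [← zpow_natCast, ← zpow_mul, ← zpow_add₀ hx, Int.ediv_mul_cancel h.symm.dvd,
    add_sub_cancel]

theorem zpow_eq_zpow_of_pow_eq_one {x : G} (hx : x ≠ 0) {N : ℕ} (hN : x ^ N = 1) {e f : ℤ}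
    (h : e ≡ f [ZMOD N]) : x ^ e = x ^ f := by
  rw [zpow_eq_zpow_mul_pow_of_modEq hx h, ← zpow_natCast, ← zpow_mul, mul_comm _ (N : ℤ),
    zpow_mul, zpow_natCast, hN, one_zpow, mul_one]

theorem exists_prod_zpow_eq_prod_zpow_mul_pow {ι : Type*} (s : Finset ι) {x : ι → G}
    (hx : ∀ i ∈ s, x i ≠ 0) {N : ℕ} {e f : ι → ℤ} (h : ∀ i ∈ s, e i ≡ f i [ZMOD N]) :
    ∃ y ≠ 0, ∏ i ∈ s, x i ^ e i = (∏ i ∈ s, x i ^ f i) * y ^ N := by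
  refine ⟨∏ i ∈ s, x i ^ ((e i - f i) / N),
    prod_ne_zero_iff.2 fun i hi => zpow_ne_zero _ (hx i hi), ?_⟩
  rw [← prod_pow, ← prod_mul_distrib]
  exact prod_congr rfl fun i hi => zpow_eq_zpow_mul_pow_of_modEq (hx i hi) (h i hi)

end PowersModuloNthPowers

theorem Int.pow_modEq_mul_pow_of_modEq {N c c' x y : ℤ} {k : ℕ}
    (hc' : c' * c ^ k ≡ 1 [ZMOD N]) (hy : y ≡ c * x [ZMOD N]) :
    x ^ k ≡ c' * y ^ k [ZMOD N] :=
  calc x ^ k = 1 * x ^ k := (one_mul _).symm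
    _ ≡ c' * c ^ k * x ^ k [ZMOD N] := hc'.symm.mul_right _
    _ = c' * (c * x) ^ k := by ring
    _ ≡ c' * y ^ k [ZMOD N] := (hy.symm.pow k).mul_left _

theorem Int.exists_natCast_modEq_of_isCoprime {N : ℕ} (hN : N ≠ 0) {c : ℤ}
    (hc : IsCoprime c N) : ∃ c₀ : ℕ, N.Coprime c₀ ∧ (c₀ : ℤ) ≡ c [ZMOD N] := by
  have hmod : 0 ≤ c % N := Int.emod_nonneg c (by exact_mod_cast hN)
  refine ⟨(c % N).toNat, ?_, ?_⟩
  · rw [Nat.coprime_comm, ← Nat.isCoprime_iff_coprime, Int.toNat_of_nonneg hmod, Int.emod_def,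
      sub_eq_add_neg, ← mul_neg]
    exact hc.add_mul_left_left _
  · rw [Int.toNat_of_nonneg hmod]
    exact Int.mod_modEq c N

section CoprimeResidues

variable {N c : ℕ}

theorem mul_mod_mem_coprime_residues (hc : N.Coprime c) {a : ℕ}
    (ha : a ∈ {a ∈ range N | N.Coprime a}) : c * a % N ∈ {a ∈ range N | N.Coprime a} := by
  rw [mem_filter, mem_range] at ha ⊢
  refine ⟨Nat.mod_lt _ (by omega), ?_⟩
  rw [Nat.Coprime, Nat.gcd_comm, ← Nat.gcd_rec]
  exact hc.mul_right ha.2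

theorem prod_coprime_residues_comp_mul_mod {M : Type*} [CommMonoid M] (hc : N.Coprime c)
    (g : ℕ → M) :
    ∏ a ∈ range N with N.Coprime a, g (c * a % N) = ∏ a ∈ range N with N.Coprime a, g a := by
  have hinj : Set.InjOn (fun a => c * a % N) ({a ∈ range N | N.Coprime a} : Finset ℕ) := by
    intro a ha b hb hab
    simp only [mem_coe, mem_filter, mem_range] at ha hb
    exact (Nat.ModEq.cancel_left_of_coprime hc hab).eq_of_lt_of_lt ha.1 hb.1
  have hmaps : ∀ a ∈ {a ∈ range N | N.Coprime a}, c * a % N ∈ {a ∈ range N | N.Coprime a} :=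
    fun a => mul_mod_mem_coprime_residues hc
  exact prod_nbij _ hmaps hinj (surjOn_of_injOn_of_card_le _ hmaps hinj le_rfl) fun _ _ => rfl

end CoprimeResidues

theorem filter_not_dvd_eq_filter_coprime {p n : ℕ} (hp : p.Prime) (hn : n ≠ 0) :
    {a ∈ range (p ^ n) | ¬ p ∣ a} = {a ∈ range (p ^ n) | (p ^ n).Coprime a} :=
  filter_congr fun a _ => by
    rw [Nat.coprime_pow_left_iff (Nat.pos_of_ne_zero hn), hp.coprime_iff_not_dvd]

theorem IsPrimitiveRoot.one_sub_pow_ne_zero {R : Type*} [CommRing R] {ζ : R} {N : ℕ}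
    (hζ : IsPrimitiveRoot ζ N) (hN : N ≠ 1) {a : ℕ} (ha : a ∈ {a ∈ range N | N.Coprime a}) :
    1 - ζ ^ a ≠ 0 := by
  rw [mem_filter, mem_range] at ha
  have ha0 : a ≠ 0 := by
    rintro rfl
    exact hN ((Nat.coprime_zero_right N).1 ha.2)
  exact sub_ne_zero.2 (hζ.pow_ne_one_of_pos_of_lt ha0 ha.1).symm

theorem map_pow_eq_pow_mul_mod {M F : Type*} [Monoid M] [FunLike F M M] [MonoidHomClass F M M]
    {ζ : M} {N c : ℕ} (hζ : ζ ^ N = 1) {σ : F} (hσ : σ ζ = ζ ^ c) (a : ℕ) :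
    σ (ζ ^ a) = ζ ^ (c * a % N) := by
  rw [map_pow, hσ, ← pow_mul, ← pow_eq_pow_mod _ hζ]

theorem isPrimitiveRoot_zetaEl (K : Subfield ℂ) {N : ℕ} (hN : N ≠ 0) :
    IsPrimitiveRoot (zetaEl K N) N :=
  (Complex.isPrimitiveRoot_exp N hN).of_map_of_injective (f := (Kmu K N).val)
    Subtype.val_injective

theorem souleUnit_eq_prod_coprime (K : Subfield ℂ) {p : ℕ} (hp : p.Prime) (m : ℕ) {n : ℕ}
    (hn : n ≠ 0) : souleUnit K p m n =
      ∏ a ∈ range (p ^ n) with (p ^ n).Coprime a, (1 - zetaEl K (p ^ n) ^ a) ^ (a ^ (m - 1)) := by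
  rw [souleUnit, filter_not_dvd_eq_filter_coprime hp hn]

theorem stmt0_general
    -- `K` is an imaginary quadratic field, viewed as a subfield of `ℂ`
    (K : Subfield ℂ)
    -- `p ≥ 5` is a prime that splits in `K`
    (p : ℕ) (hp : p.Prime)
    (m n : ℕ) (hn : 1 ≤ n)
    -- `σ ∈ Gal(K(μ_{p^n})/K)`
    (σ : Kmu K (p ^ n) ≃ₐ[K] Kmu K (p ^ n))
    -- `c` an integer prime to `p` with `σ(ζ_{p^n}) = ζ_{p^n}^c`
    (c : ℤ) (hc : IsCoprime c (p : ℤ))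
    (hσ : σ (zetaEl K (p ^ n)) = zetaEl K (p ^ n) ^ c)
    -- `c'` an integer with `c'·c^{m-1} ≡ 1 (mod p^n)`
    (c' : ℤ) (hc' : c' * c ^ (m - 1) ≡ 1 [ZMOD (p : ℤ) ^ n]) :
    ∃ y : Kmu K (p ^ n), y ≠ 0 ∧
      σ (souleUnit K p m n) = souleUnit K p m n ^ c' * y ^ (p ^ n) := by
  set ζ := zetaEl K (p ^ n)
  have hN : p ^ n ≠ 0 := pow_ne_zero n hp.ne_zero
  have hζ : IsPrimitiveRoot ζ (p ^ n) := isPrimitiveRoot_zetaEl K hN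
  obtain ⟨c₀, hc₀, hc₀c⟩ := Int.exists_natCast_modEq_of_isCoprime hN
    (by exact_mod_cast hc.pow_right (n := n))
  have hσ₀ : σ ζ = ζ ^ c₀ := by
    rw [hσ, zpow_eq_zpow_of_pow_eq_one (hζ.ne_zero hN) hζ.pow_eq_one hc₀c.symm, zpow_natCast]
  have hε : souleUnit K p m n =
      ∏ a ∈ range (p ^ n) with (p ^ n).Coprime a, (1 - ζ ^ a) ^ (a ^ (m - 1)) :=
    souleUnit_eq_prod_coprime K hp m (by omega)
  have hσε : σ (souleUnit K p m n) = ∏ a ∈ range (p ^ n) with (p ^ n).Coprime a,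
      (1 - ζ ^ (c₀ * a % p ^ n)) ^ ((a ^ (m - 1) : ℕ) : ℤ) := by
    rw [hε, map_prod]
    refine prod_congr rfl fun a _ => ?_
    rw [map_pow, map_sub, map_one, map_pow_eq_pow_mul_mod hζ.pow_eq_one hσ₀, zpow_natCast]
  have hεc' : souleUnit K p m n ^ c' = ∏ a ∈ range (p ^ n) with (p ^ n).Coprime a,
      (1 - ζ ^ (c₀ * a % p ^ n)) ^ (c' * ((c₀ * a % p ^ n : ℕ) : ℤ) ^ (m - 1)) := by
    rw [prod_coprime_residues_comp_mul_mod hc₀ fun b => (1 - ζ ^ b) ^ (c' * (b : ℤ) ^ (m - 1)),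
      hε, ← prod_zpow]
    refine prod_congr rfl fun a _ => ?_
    rw [← zpow_natCast, ← zpow_mul, mul_comm, Nat.cast_pow]
  have hN₁ : p ^ n ≠ 1 := (Nat.one_lt_pow (by omega) hp.one_lt).ne'
  rw [hσε, hεc']
  refine exists_prod_zpow_eq_prod_zpow_mul_pow _
    (fun a ha => hζ.one_sub_pow_ne_zero hN₁ (mul_mod_mem_coprime_residues hc₀ ha)) fun a _ => ?_
  push_cast
  exact Int.pow_modEq_mul_pow_of_modEq hc' ((Int.mod_modEq _ _).trans (hc₀c.mul_right _))

theorem stmt0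
    -- `K` is an imaginary quadratic field, viewed as a subfield of `ℂ`
    (K : Subfield ℂ) [FiniteDimensional ℚ ↥K]
    (hquad : Module.finrank ℚ ↥K = 2)
    (him : ∃ z : ↥K, (z : ℂ).im ≠ 0)
    -- `p ≥ 5` is a prime that splits in `K`
    (p : ℕ) (hp : p.Prime) (hp5 : 5 ≤ p)
    (hsplit : ∃ P Q : Ideal (NumberField.RingOfIntegers ↥K), P.IsPrime ∧ Q.IsPrime ∧
      P ≠ Q ∧ P * Q = Ideal.span {(p : NumberField.RingOfIntegers ↥K)})
    (m n : ℕ) (hm : 1 ≤ m) (hn : 1 ≤ n)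
    -- `σ ∈ Gal(K(μ_{p^n})/K)`
    (σ : Kmu K (p ^ n) ≃ₐ[K] Kmu K (p ^ n))
    -- `c` an integer prime to `p` with `σ(ζ_{p^n}) = ζ_{p^n}^c`
    (c : ℤ) (hc : IsCoprime c (p : ℤ))
    (hσ : σ (zetaEl K (p ^ n)) = zetaEl K (p ^ n) ^ c)
    -- `c'` an integer with `c'·c^{m-1} ≡ 1 (mod p^n)`
    (c' : ℤ) (hc' : c' * c ^ (m - 1) ≡ 1 [ZMOD (p : ℤ) ^ n]) :
    ∃ y : Kmu K (p ^ n), y ≠ 0 ∧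
      σ (souleUnit K p m n) = souleUnit K p m n ^ c' * y ^ (p ^ n) :=
  stmt0_general K p hp m n hn σ c hc hσ c' hc'
end

section
/- For all integers m, n ≥ 1 there exists y ∈ K(μ_{p^{n+1}})^× such that ε^{cyc}_{m,n+1} = ε^{cyc}_{m,n} · y^{p^n} (note ζ_{p^n} = ζ_{p^{n+1}}^p, so ε^{cyc}_{m,n} ∈ K(μ_{p^{n+1}})^×); that is, ε^{cyc}_{m,n+1} ≡ ε^{cyc}_{m,n} in K(μ_{p^{n+1}})^×/(K(μ_{p^{n+1}})^×)^{p^n}. -/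
open Complex

/-- exponent splitting: `(a + t p^n)^k = a^k + p^n c` for some natural `c`. -/
lemma exp_split (p n k a t : ℕ) : ∃ c : ℕ, (a + t * p ^ n) ^ k = a ^ k + p ^ n * c := by
  have h1 : a ^ k ≤ (a + t * p ^ n) ^ k := Nat.pow_le_pow_left (Nat.le_add_right _ _) k
  have h2 : ((p : ℤ) ^ n) ∣ (((a + t * p ^ n : ℕ) : ℤ) ^ k - (a : ℤ) ^ k) := by
    refine dvd_trans ⟨t, ?_⟩ (sub_dvd_pow_sub_pow _ _ k)
    push_cast; ring
  have h3 : p ^ n ∣ (a + t * p ^ n) ^ k - a ^ k := by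
    have : (((a + t * p ^ n) ^ k - a ^ k : ℕ) : ℤ) = ((a + t * p ^ n : ℕ) : ℤ) ^ k - (a : ℤ) ^ k := by
      push_cast [h1]; ring
    exact_mod_cast this ▸ h2
  obtain ⟨c, hc⟩ := h3
  exact ⟨c, by omega⟩

/-- If `ω` is a primitive `p`-th root of unity, `∏_{t<p} (1 - ω^t x) = 1 - x^p`. -/
lemma prod_one_sub_root_mul {p : ℕ} (hp : 0 < p) {ω : ℂ} (hω : IsPrimitiveRoot ω p) (x : ℂ) :
    ∏ t ∈ Finset.range p, (1 - ω ^ t * x) = 1 - x ^ p := by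
  have h := X_pow_sub_C_eq_prod hω hp (rfl : x ^ p = x ^ p)
  apply_fun Polynomial.eval 1 at h
  simpa [Polynomial.eval_prod] using h.symm

theorem stmt1
    -- `K` is an imaginary quadratic field, viewed as a subfield of `ℂ`
    (K : Subfield ℂ) [FiniteDimensional ℚ ↥K]
    (hquad : Module.finrank ℚ ↥K = 2)
    (him : ∃ z : ↥K, (z : ℂ).im ≠ 0)
    -- `p ≥ 5` is a prime that splits in `K`
    (p : ℕ) (hp : p.Prime) (hp5 : 5 ≤ p)
    (hsplit : ∃ P Q : Ideal (NumberField.RingOfIntegers ↥K), P.IsPrime ∧ Q.IsPrime ∧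
      P ≠ Q ∧ P * Q = Ideal.span {(p : NumberField.RingOfIntegers ↥K)})
    (m n : ℕ) (hm : 1 ≤ m) (hn : 1 ≤ n) :
    -- `ε^{cyc}_{m,n+1} ≡ ε^{cyc}_{m,n}` modulo `p^n`-th powers in `K(μ_{p^{n+1}})^×`
    ∃ y : Kmu K (p ^ (n + 1)), y ≠ 0 ∧
      (souleUnit K p m (n + 1) : ℂ) = (souleUnit K p m n : ℂ) * (y : ℂ) ^ (p ^ n) := by
  have hp0 : 0 < p := hp.pos
  have hpn : 0 < p ^ n := pow_pos hp0 n
  have hpn1 : 0 < p ^ (n + 1) := pow_pos hp0 (n + 1)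
  have hppn : p ∣ p ^ n := dvd_pow_self p (by omega)
  set ζ : ℂ := zeta (p ^ (n + 1)) with hζdef
  have hprim : IsPrimitiveRoot ζ (p ^ (n + 1)) := by
    have := Complex.isPrimitiveRoot_exp (p ^ (n + 1)) hpn1.ne'
    simpa [hζdef, zeta] using this
  have hω : IsPrimitiveRoot (ζ ^ (p ^ n)) p :=
    IsPrimitiveRoot.pow hpn1 hprim (by rw [pow_succ])
  have hzp : zeta (p ^ n) = ζ ^ p := by
    rw [hζdef, zeta, zeta, ← Complex.exp_nat_mul]
    congr 1
    have h1 : ((p : ℂ) ^ n) ≠ 0 := pow_ne_zero _ (Nat.cast_ne_zero.mpr hp0.ne')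
    have h2 : ((p : ℂ) ^ (n + 1)) ≠ 0 := pow_ne_zero _ (Nat.cast_ne_zero.mpr hp0.ne')
    push_cast
    field_simp
    ring
  -- choose the natural numbers c a t
  choose c hc using fun a t => exp_split p n (m - 1) a t
  -- index sets
  set S0 := (Finset.range (p ^ n)).filter (fun a => ¬ p ∣ a) with hS0
  set S1 := (Finset.range (p ^ (n + 1))).filter (fun a => ¬ p ∣ a) with hS1
  -- nonvanishing of the factors
  have hne : ∀ b : ℕ, 0 < b → b < p ^ (n + 1) → (1 : ℂ) - ζ ^ b ≠ 0 := by
    intro b hb1 hb2 h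
    have : ζ ^ b = 1 := by linear_combination -h
    have := (hprim.pow_eq_one_iff_dvd b).mp this
    exact absurd (Nat.le_of_dvd hb1 this) (by omega)
  have hmem : ∀ a ∈ S0, ∀ t ∈ Finset.range p, a + t * p ^ n < p ^ (n + 1) ∧ 0 < a + t * p ^ n := by
    intro a ha t ht
    simp only [hS0, Finset.mem_filter, Finset.mem_range] at ha
    simp only [Finset.mem_range] at ht
    constructor
    · calc a + t * p ^ n < p ^ n + t * p ^ n := by omega
        _ = (t + 1) * p ^ n := by ring
        _ ≤ p * p ^ n := Nat.mul_le_mul_right _ (by omega)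
        _ = p ^ (n + 1) := by rw [pow_succ]; ring
    · rcases Nat.eq_zero_or_pos a with h | h
      · exact absurd (h ▸ dvd_zero p) ha.2
      · omega
  -- the candidate y, as an element of the field
  refine ⟨∏ a ∈ S0, ∏ t ∈ Finset.range p,
      (1 - zetaEl K (p ^ (n + 1)) ^ (a + t * p ^ n)) ^ (c a t), ?_, ?_⟩
  · -- nonzero
    refine Finset.prod_ne_zero_iff.mpr fun a ha => Finset.prod_ne_zero_iff.mpr fun t ht => ?_
    refine pow_ne_zero _ fun h => ?_
    obtain ⟨hlt, hpos⟩ := hmem a ha t ht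
    apply hne _ hpos hlt
    have := congrArg (Subtype.val : Kmu K (p ^ (n + 1)) → ℂ) h
    push_cast at this
    simpa [zetaEl, hζdef] using this
  · -- the main identity
    -- coerce everything to ℂ
    have hy : ((∏ a ∈ S0, ∏ t ∈ Finset.range p,
        (1 - zetaEl K (p ^ (n + 1)) ^ (a + t * p ^ n)) ^ (c a t) : Kmu K (p ^ (n + 1))) : ℂ)
        = ∏ a ∈ S0, ∏ t ∈ Finset.range p, (1 - ζ ^ (a + t * p ^ n)) ^ (c a t) := by
      push_cast
      rfl
    have hsn1 : ((souleUnit K p m (n + 1) : Kmu K (p ^ (n + 1))) : ℂ)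
        = ∏ b ∈ S1, (1 - ζ ^ b) ^ (b ^ (m - 1)) := by
      rw [souleUnit]; push_cast; rfl
    have hsn : ((souleUnit K p m n : Kmu K (p ^ n)) : ℂ)
        = ∏ a ∈ S0, (1 - (ζ ^ p) ^ a) ^ (a ^ (m - 1)) := by
      rw [souleUnit, ← hzp]; push_cast; rfl
    rw [hy, hsn1, hsn]
    -- reindex the product over S1
    have hre : ∏ b ∈ S1, (1 - ζ ^ b) ^ (b ^ (m - 1))
        = ∏ a ∈ S0, ∏ t ∈ Finset.range p,
            (1 - ζ ^ (a + t * p ^ n)) ^ ((a + t * p ^ n) ^ (m - 1)) := by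
      rw [← Finset.prod_product']
      refine (Finset.prod_nbij' (fun b => (b % p ^ n, b / p ^ n))
        (fun x => x.1 + x.2 * p ^ n) ?_ ?_ ?_ ?_ ?_)
      · intro b hb
        simp only [hS1, Finset.mem_filter, Finset.mem_range] at hb
        simp only [hS0, Finset.mem_product, Finset.mem_filter, Finset.mem_range]
        refine ⟨⟨Nat.mod_lt _ hpn, fun hd => hb.2 ?_⟩, ?_⟩
        · have : b = p ^ n * (b / p ^ n) + b % p ^ n := (Nat.div_add_mod b (p ^ n)).symm
          exact this ▸ Nat.dvd_add (hppn.trans (Dvd.intro _ rfl)) hd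
        · have : b < p ^ n * p := by rw [← pow_succ]; exact hb.1
          exact Nat.div_lt_of_lt_mul this
      · intro x hx
        simp only [Finset.mem_product] at hx
        obtain ⟨hlt, hpos⟩ := hmem x.1 hx.1 x.2 hx.2
        simp only [hS0, Finset.mem_filter, Finset.mem_range] at hx ⊢
        simp only [hS1, Finset.mem_filter, Finset.mem_range]
        refine ⟨hlt, fun hd => hx.1.2 ?_⟩
        have hdd : p ∣ x.2 * p ^ n := hppn.mul_left x.2
        rw [Nat.add_comm] at hd
        exact (Nat.dvd_add_right hdd).mp hd
      · intro b hb
        exact Nat.mod_add_div' b (p ^ n)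
      · intro x hx
        simp only [Finset.mem_product] at hx
        simp only [hS0, Finset.mem_filter, Finset.mem_range] at hx
        have h1 : (x.1 + x.2 * p ^ n) % p ^ n = x.1 := by
          rw [Nat.add_mul_mod_self_right, Nat.mod_eq_of_lt hx.1.1]
        have h2 : (x.1 + x.2 * p ^ n) / p ^ n = x.2 := by
          rw [Nat.add_mul_div_right _ _ hpn, Nat.div_eq_of_lt hx.1.1, Nat.zero_add]
        simp [h1, h2]
      · intro b hb
        rw [Nat.mod_add_div' b (p ^ n)]
    rw [hre]
    have hinner : ∀ a, ∏ t ∈ Finset.range p, (1 - ζ ^ (a + t * p ^ n))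
        = 1 - (ζ ^ p) ^ a := by
      intro a
      have h0 : ∀ t ∈ Finset.range p, (1 - ζ ^ (a + t * p ^ n))
          = 1 - (ζ ^ (p ^ n)) ^ t * ζ ^ a := by
        intro t ht
        rw [pow_add, mul_comm t (p ^ n), pow_mul, mul_comm (ζ ^ a)]
      rw [Finset.prod_congr rfl h0, prod_one_sub_root_mul hp0 hω (ζ ^ a),
        ← pow_mul, ← pow_mul, mul_comm]
    calc ∏ a ∈ S0, ∏ t ∈ Finset.range p,
          (1 - ζ ^ (a + t * p ^ n)) ^ ((a + t * p ^ n) ^ (m - 1))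
        = ∏ a ∈ S0, ((1 - (ζ ^ p) ^ a) ^ (a ^ (m - 1))
            * (∏ t ∈ Finset.range p, (1 - ζ ^ (a + t * p ^ n)) ^ (c a t)) ^ (p ^ n)) := by
          refine Finset.prod_congr rfl fun a ha => ?_
          have key : ∀ t ∈ Finset.range p,
              (1 - ζ ^ (a + t * p ^ n)) ^ ((a + t * p ^ n) ^ (m - 1))
              = (1 - ζ ^ (a + t * p ^ n)) ^ (a ^ (m - 1))
                * ((1 - ζ ^ (a + t * p ^ n)) ^ (c a t)) ^ (p ^ n) := by
            intro t ht
            rw [hc a t, pow_add, ← pow_mul, mul_comm (p ^ n) (c a t)]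
          rw [Finset.prod_congr rfl key, Finset.prod_mul_distrib, Finset.prod_pow,
            Finset.prod_pow, hinner a]
      _ = (∏ a ∈ S0, (1 - (ζ ^ p) ^ a) ^ (a ^ (m - 1)))
            * ∏ a ∈ S0, (∏ t ∈ Finset.range p, (1 - ζ ^ (a + t * p ^ n)) ^ (c a t)) ^ (p ^ n) :=
          Finset.prod_mul_distrib
      _ = (∏ a ∈ S0, (1 - (ζ ^ p) ^ a) ^ (a ^ (m - 1)))
            * (∏ a ∈ S0, ∏ t ∈ Finset.range p, (1 - ζ ^ (a + t * p ^ n)) ^ (c a t)) ^ (p ^ n) := by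
          rw [Finset.prod_pow]
end

section
/- For all integers k, n ≥ 1 and every integer c with c·ℓ ≡ 1 (mod p^n), the field norm from ℚ(μ_{ℓ^k p^n}) to ℚ(μ_{p^n}) of the element 1 − ζ_{ℓ^k p^n} equals (1 − ζ_{p^n}) · (1 − ζ_{p^n}^c)^{−1}. -/
open Complex

/-- The `N`-th cyclotomic field `ℚ(μ_N) ⊆ ℂ`. -/
noncomputable def Qmu (N : ℕ) : IntermediateField ℚ ℂ :=
  IntermediateField.adjoin ℚ {zeta N}

/-- `ζ_N` as an element of `ℚ(μ_N)`. -/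
noncomputable def zetaQ (N : ℕ) : Qmu N :=
  ⟨zeta N, IntermediateField.subset_adjoin ℚ {zeta N} rfl⟩

/-!
Over `E = ℚ(μ_{p^n})` put `β = ζ_{p^n}^c`, an `ℓ`-th root of `ζ_{p^n}` with `β^{p^n} = 1`. Then
`ζ = ζ_{ℓ^k p^n}` is a root of `X^{ℓ^k} - β^ℓ` but not of `X^{ℓ^{k-1}} - β` (`ζ^{ℓ^{k-1}}` has
order `ℓ p^n`), hence of `g = (X^{ℓ^k} - β^ℓ) / (X^{ℓ^{k-1}} - β)`. The tower
`ℚ ⊆ E ⊆ ℚ(μ_{ℓ^k p^n})` gives `[E(ζ) : E] = φ(ℓ^k) = deg g`, so `g` is the minimal polynomial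
of `ζ` over `E`, and the norm of `1 - ζ` is `g(1) = (1 - ζ_{p^n}) / (1 - β)`.
-/

open Polynomial IntermediateField Module

theorem Algebra.PowerBasis.norm_algebraMap_sub_gen {R S : Type*} [CommRing R] [CommRing S]
    [Algebra R S] (pb : PowerBasis R S) (a : R) :
    Algebra.norm R (algebraMap R S a - pb.gen) = (minpoly R pb.gen).eval a := by
  rw [Algebra.norm_eq_matrix_det pb.basis, map_sub, AlgHom.commutes, ← charpoly_leftMulMatrix,
    Matrix.eval_charpoly, Matrix.algebraMap_eq_diagonal]
  rfl

theorem IntermediateField.norm_algebraMap_sub_gen {K L : Type*} [Field K] [Field L] [Algebra K L]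
    {x : L} (hx : IsIntegral K x) (a : K) :
    Algebra.norm K (algebraMap K K⟮x⟯ a - AdjoinSimple.gen K x) = (minpoly K x).eval a := by
  rw [← adjoin.powerBasis_gen hx, Algebra.PowerBasis.norm_algebraMap_sub_gen,
    adjoin.powerBasis_gen, minpoly_gen]

theorem isPrimitiveRoot_zeta {N : ℕ} (hN : N ≠ 0) : IsPrimitiveRoot (zeta N) N :=
  Complex.isPrimitiveRoot_exp N hN

theorem zeta_mul_pow {a b : ℕ} (ha : a ≠ 0) (hb : b ≠ 0) : zeta (a * b) ^ a = zeta b := by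
  rw [zeta, zeta, ← Complex.exp_nat_mul]
  congr 1
  push_cast
  field_simp

theorem isIntegral_zeta (R : Type*) [CommRing R] [Algebra R ℂ] {N : ℕ} (hN : N ≠ 0) :
    IsIntegral R (zeta N) :=
  ((isPrimitiveRoot_zeta hN).isIntegral (Nat.pos_of_ne_zero hN)).tower_top

theorem algebraMap_zetaQ (N : ℕ) : algebraMap (Qmu N) ℂ (zetaQ N) = zeta N := rfl

theorem isPrimitiveRoot_zetaQ {N : ℕ} (hN : N ≠ 0) : IsPrimitiveRoot (zetaQ N) N :=
  (isPrimitiveRoot_zeta hN).of_map_of_injective (f := algebraMap (Qmu N) ℂ)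
    (algebraMap (Qmu N) ℂ).injective

theorem IsPrimitiveRoot.zpow_pow_eq_self {G : Type*} [CommGroupWithZero G] {ζ : G} {N ℓ : ℕ}
    {c : ℤ} (h : IsPrimitiveRoot ζ N) (hc : c * ℓ ≡ 1 [ZMOD N]) : (ζ ^ c) ^ ℓ = ζ := by
  rw [← zpow_natCast, ← zpow_mul]
  rcases eq_or_ne N 0 with rfl | hN
  · rw [show c * ℓ = 1 from Int.modEq_zero_iff.mp (by simpa using hc), zpow_one]
  · have h1 : ζ ^ (c * ℓ - 1) = 1 := (h.zpow_eq_one_iff_dvd _).mpr hc.symm.dvd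
    rwa [zpow_sub_one₀ (h.ne_zero hN), mul_inv_eq_one₀ (h.ne_zero hN)] at h1

theorem finrank_Qmu {N : ℕ} (hN : N ≠ 0) : finrank ℚ (Qmu N) = N.totient := by
  have hpos := Nat.pos_of_ne_zero hN
  rw [Qmu, adjoin.finrank (isIntegral_zeta ℚ hN),
    ← cyclotomic_eq_minpoly_rat (isPrimitiveRoot_zeta hN) hpos, natDegree_cyclotomic]

theorem Qmu_le_Qmu_mul {a b : ℕ} (ha : a ≠ 0) (hb : b ≠ 0) : Qmu b ≤ Qmu (a * b) := by
  refine adjoin_simple_le_iff.mpr ?_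
  rw [← zeta_mul_pow ha hb]
  exact pow_mem (mem_adjoin_simple_self ℚ _) a

theorem restrictScalars_adjoin_zeta_mul {a b : ℕ} (ha : a ≠ 0) (hb : b ≠ 0) :
    (adjoin (Qmu b) {zeta (a * b)}).restrictScalars ℚ = Qmu (a * b) := by
  refine (restrictScalars_adjoin ℚ (Qmu b) _).trans <|
    le_antisymm ?_ (adjoin.mono ℚ _ _ Set.subset_union_right)
  rw [adjoin_le_iff, Set.union_subset_iff]
  exact ⟨Qmu_le_Qmu_mul ha hb, Set.singleton_subset_iff.mpr (subset_adjoin ℚ _ rfl)⟩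

theorem finrank_adjoin_zeta_mul {a b : ℕ} (ha : a ≠ 0) (hb : b ≠ 0) (hab : a.Coprime b) :
    finrank (Qmu b) (adjoin (Qmu b) {zeta (a * b)}) = a.totient := by
  have htower := finrank_mul_finrank ℚ (Qmu b) (adjoin (Qmu b) {zeta (a * b)})
  have hK : finrank ℚ (adjoin (Qmu b) {zeta (a * b)}) = (a * b).totient := by
    rw [← finrank_Qmu (mul_ne_zero ha hb), ← restrictScalars_adjoin_zeta_mul ha hb]
    rfl
  rw [hK, finrank_Qmu hb, Nat.totient_mul hab, mul_comm] at htower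
  exact Nat.eq_of_mul_eq_mul_right (Nat.totient_pos.mpr (Nat.pos_of_ne_zero hb)) htower

/-- `(X ^ (m * q) - β ^ q) / (X ^ m - β)` -/
noncomputable def geomQuot {R : Type*} [CommRing R] (m q : ℕ) (β : R) : R[X] :=
  ∑ i ∈ Finset.range q, (X ^ m) ^ i * C β ^ (q - 1 - i)

section geomQuot

variable {R : Type*} [CommRing R] (m q : ℕ) (β : R)

theorem geomQuot_mul : geomQuot m q β * (X ^ m - C β) = X ^ (m * q) - C (β ^ q) := by
  rw [geomQuot, geom_sum₂_mul, pow_mul, C_pow]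

theorem eval_one_geomQuot_mul : (geomQuot m q β).eval 1 * (1 - β) = 1 - β ^ q := by
  simpa using congrArg (eval 1) (geomQuot_mul m q β)

variable {m q}

theorem monic_geomQuot (hm : m ≠ 0) (hq : q ≠ 0) : (geomQuot m q β).Monic :=
  (monic_X_pow_sub_C β hm).of_mul_monic_right
    (by rw [geomQuot_mul]; exact monic_X_pow_sub_C _ (mul_ne_zero hm hq))

theorem natDegree_geomQuot [Nontrivial R] (hm : m ≠ 0) (hq : q ≠ 0) :
    (geomQuot m q β).natDegree = m * (q - 1) := by
  have h := (monic_geomQuot β hm hq).natDegree_mul (monic_X_pow_sub_C β hm)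
  rw [geomQuot_mul, natDegree_X_pow_sub_C, natDegree_X_pow_sub_C] at h
  rw [Nat.mul_sub_one]
  omega

end geomQuot

theorem minpoly_zeta_prime_pow_mul {ℓ b j : ℕ} (hl : ℓ.Prime) (hb : b ≠ 0) (hlb : ℓ.Coprime b)
    {c : ℤ} (hc : c * ℓ ≡ 1 [ZMOD b]) :
    minpoly (Qmu b) (zeta (ℓ ^ (j + 1) * b)) = geomQuot (ℓ ^ j) ℓ (zetaQ b ^ c) := by
  set ζ := zeta (ℓ ^ (j + 1) * b)
  set β := zetaQ b ^ c
  have hN : ℓ ^ (j + 1) * b ≠ 0 := mul_ne_zero (pow_ne_zero _ hl.ne_zero) hb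
  have hζ := isPrimitiveRoot_zeta hN
  have hint : IsIntegral (Qmu b) ζ := isIntegral_zeta _ hN
  have hβℓ : β ^ ℓ = zetaQ b := (isPrimitiveRoot_zetaQ hb).zpow_pow_eq_self hc
  have hβb : β ^ b = 1 := by
    rw [← zpow_natCast, ← zpow_mul, mul_comm, zpow_mul, zpow_natCast,
      (isPrimitiveRoot_zetaQ hb).pow_eq_one, one_zpow]
  have hm : ζ ^ ℓ ^ j ≠ algebraMap (Qmu b) ℂ β := by
    intro h
    have hprim : IsPrimitiveRoot (ζ ^ ℓ ^ j) (ℓ * b) := hζ.pow (Nat.pos_of_ne_zero hN) (by ring)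
    have hdvd : ℓ * b ∣ b := hprim.pow_eq_one_iff_dvd _ |>.mp (by rw [h, ← map_pow, hβb, map_one])
    have := Nat.le_of_dvd (Nat.pos_of_ne_zero hb) hdvd
    nlinarith [hl.two_le, Nat.pos_of_ne_zero hb]
  have hroot : aeval ζ (geomQuot (ℓ ^ j) ℓ β) = 0 := by
    have h := congrArg (aeval ζ) (geomQuot_mul (ℓ ^ j) ℓ β)
    rw [map_mul, map_sub, map_sub, aeval_X_pow, aeval_X_pow, aeval_C, aeval_C, ← pow_succ, hβℓ,
      algebraMap_zetaQ, zeta_mul_pow (pow_ne_zero _ hl.ne_zero) hb, sub_self] at h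
    exact (mul_eq_zero.mp h).resolve_right (sub_ne_zero.mpr hm)
  have hdeg : (geomQuot (ℓ ^ j) ℓ β).natDegree = (minpoly (Qmu b) ζ).natDegree := by
    rw [natDegree_geomQuot _ (pow_ne_zero _ hl.ne_zero) hl.ne_zero, ← adjoin.finrank hint,
      finrank_adjoin_zeta_mul (pow_ne_zero _ hl.ne_zero) hb (hlb.pow_left _),
      Nat.totient_prime_pow_succ hl]
  exact (eq_of_monic_of_dvd_of_natDegree_le (minpoly.monic hint)
    (monic_geomQuot β (pow_ne_zero _ hl.ne_zero) hl.ne_zero) (minpoly.dvd _ _ hroot) hdeg.le).symm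

theorem stmt3_general
    -- `p` and `ℓ` are distinct primes with `p` odd
    (p ℓ : ℕ) (hp : p.Prime) (hl : ℓ.Prime) (hpl : p ≠ ℓ)
    (k n : ℕ) (hk : 1 ≤ k) (hn : 1 ≤ n)
    -- `c` an integer with `c·ℓ ≡ 1 (mod p^n)`
    (c : ℤ) (hc : c * ℓ ≡ 1 [ZMOD (p : ℤ) ^ n])
    -- `ζ_{ℓ^k p^n}` as an element of `ℚ(μ_{ℓ^k p^n}) = ℚ(μ_{p^n})(ζ_{ℓ^k p^n})`
    (ζbig : IntermediateField.adjoin ↥(Qmu (p ^ n)) {zeta (ℓ ^ k * p ^ n)})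
    (hζbig : (ζbig : ℂ) = zeta (ℓ ^ k * p ^ n)) :
    -- the field norm of `1 - ζ_{ℓ^k p^n}` down to `ℚ(μ_{p^n})`
    Algebra.norm ↥(Qmu (p ^ n)) (1 - ζbig)
      = (1 - zetaQ (p ^ n)) * (1 - zetaQ (p ^ n) ^ c)⁻¹ := by
  obtain ⟨j, rfl⟩ := Nat.exists_eq_add_of_le' hk
  have hb : p ^ n ≠ 0 := pow_ne_zero _ hp.ne_zero
  have hlb : ℓ.Coprime (p ^ n) := ((Nat.coprime_primes hl hp).mpr hpl.symm).pow_right _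
  have hc' : c * ℓ ≡ 1 [ZMOD ((p ^ n : ℕ) : ℤ)] := by exact_mod_cast hc
  have hζQ := isPrimitiveRoot_zetaQ hb
  have hβ : 1 - zetaQ (p ^ n) ^ c ≠ 0 := by
    refine sub_ne_zero.mpr fun h ↦ hζQ.ne_one (Nat.one_lt_pow (by omega) hp.one_lt) ?_
    rw [← hζQ.zpow_pow_eq_self hc', ← h, one_pow]
  have hnorm := norm_algebraMap_sub_gen (isIntegral_zeta (Qmu (p ^ n))
    (mul_ne_zero (pow_ne_zero (j + 1) hl.ne_zero) hb)) 1
  rw [map_one] at hnorm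
  rw [eq_mul_inv_iff_mul_eq₀ hβ, show ζbig = AdjoinSimple.gen _ _ from Subtype.ext hζbig, hnorm,
    minpoly_zeta_prime_pow_mul hl hb hlb hc', eval_one_geomQuot_mul, hζQ.zpow_pow_eq_self hc']

theorem stmt3
    -- `p` and `ℓ` are distinct primes with `p` odd
    (p ℓ : ℕ) (hp : p.Prime) (hl : ℓ.Prime) (hpl : p ≠ ℓ) (hodd : Odd p)
    (k n : ℕ) (hk : 1 ≤ k) (hn : 1 ≤ n)
    -- `c` an integer with `c·ℓ ≡ 1 (mod p^n)`
    (c : ℤ) (hc : c * ℓ ≡ 1 [ZMOD (p : ℤ) ^ n])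
    -- `ζ_{ℓ^k p^n}` as an element of `ℚ(μ_{ℓ^k p^n}) = ℚ(μ_{p^n})(ζ_{ℓ^k p^n})`
    (ζbig : IntermediateField.adjoin ↥(Qmu (p ^ n)) {zeta (ℓ ^ k * p ^ n)})
    (hζbig : (ζbig : ℂ) = zeta (ℓ ^ k * p ^ n)) :
    -- the field norm of `1 - ζ_{ℓ^k p^n}` down to `ℚ(μ_{p^n})`
    Algebra.norm ↥(Qmu (p ^ n)) (1 - ζbig)
      = (1 - zetaQ (p ^ n)) * (1 - zetaQ (p ^ n) ^ c)⁻¹ :=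
  stmt3_general p ℓ hp hl hpl k n hk hn c hc ζbig hζbig
end

section
/- If L is an intermediate field K ⊆ L ⊆ ℂ such that L/K is a Galois extension whose Galois group is abelian, then there is no element x ∈ L with x^p = p. (The paper uses this to conclude that p is not a p-th power in the abelian extension K(p^∞) of K, so that the Soulé character χ_m is surjective when m ≡ 1 mod (p−1).) -/
/-!
Suppose `x ^ p = p` with `x` in an abelian Galois extension `E` of a quadratic field `F`.
Taking norms, `p` divides the degree over `ℚ` of every number field containing `x`; so `x ∉ F`,
and some `σ₀` moves `x`, which makes `ζ = σ₀ x / x` a primitive `p`-th root of unity.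
Since `[F⟮ζ⟯ : ℚ] = 2 [F⟮ζ⟯ : F]` with `[F⟮ζ⟯ : F] < p`, also `x ∉ F⟮ζ⟯`, so some `σ` fixing `ζ`
moves `x`. Every `τ` multiplies `x` by a power of `ζ`, and since `τ` commutes with `σ`, it fixes
the primitive root `σ x / x`. Hence `F` contains a primitive `p`-th root of unity, which is
impossible because `φ p = p - 1 > 2`.
-/

open Polynomial IntermediateField Module

theorem prime_dvd_finrank_of_pow_eq_self {F : Type*} [Field F] [Algebra ℚ F] {p : ℕ}
    (hp : p.Prime) {y : F} (hy : y ^ p = p) : p ∣ finrank ℚ F := by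
  have := Fact.mk hp
  have hnorm : Algebra.norm ℚ y ^ p = (p : ℚ) ^ finrank ℚ F := by
    rw [← map_pow, hy, ← map_natCast (algebraMap ℚ F), Algebra.norm_algebraMap]
  have hval := congrArg (padicValRat p) hnorm
  rw [padicValRat.pow, padicValRat.pow, padicValRat.self hp.one_lt, mul_one] at hval
  exact Int.natCast_dvd_natCast.mp ⟨_, hval.symm⟩

theorem IntermediateField.notMem_of_pow_eq_self_of_not_dvd_finrank {F E : Type*} [Field F]
    [CharZero F] [Field E] [Algebra F E] {p : ℕ} (hp : p.Prime) (hF : ¬ p ∣ finrank ℚ F)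
    {K : IntermediateField F E} (hK : ¬ p ∣ finrank F K) {x : E} (hx : x ^ p = p) :
    x ∉ K := fun hxK ↦ by
  have hdvd := prime_dvd_finrank_of_pow_eq_self hp (y := (⟨x, hxK⟩ : K)) (Subtype.ext (by simpa))
  rw [← finrank_mul_finrank ℚ F K] at hdvd
  exact (hp.dvd_mul.mp hdvd).elim hF hK

theorem IsPrimitiveRoot.of_prime_of_pow_eq_one {M : Type*} [CommMonoid M] {ζ : M} {p : ℕ}
    (hp : p.Prime) (hζ : ζ ^ p = 1) (hζ1 : ζ ≠ 1) : IsPrimitiveRoot ζ p :=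
  have := Fact.mk hp
  orderOf_eq_prime hζ hζ1 ▸ IsPrimitiveRoot.orderOf ζ

theorem IsPrimitiveRoot.totient_le_finrank_rat {F : Type*} [Field F] [CharZero F]
    [FiniteDimensional ℚ F] {ζ : F} {n : ℕ} (hζ : IsPrimitiveRoot ζ n) (hn : 0 < n) :
    n.totient ≤ finrank ℚ F := by
  rw [← natDegree_cyclotomic n ℚ, cyclotomic_eq_minpoly_rat hζ hn]
  exact minpoly.natDegree_le ζ

theorem IsPrimitiveRoot.finrank_adjoin_le_totient {F E : Type*} [Field F] [Field E]
    [Algebra F E] {ζ : E} {n : ℕ} (hζ : IsPrimitiveRoot ζ n) (hn : 0 < n) :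
    finrank F F⟮ζ⟯ ≤ n.totient := by
  rw [adjoin.finrank (hζ.isIntegral hn).tower_top, ← natDegree_cyclotomic n F]
  refine natDegree_le_natDegree (minpoly.degree_le_of_ne_zero F ζ (cyclotomic_ne_zero n F) ?_)
  rw [aeval_def, eval₂_eq_eval_map, map_cyclotomic]
  exact hζ.isRoot_cyclotomic hn

theorem exists_algEquiv_apply_ne {F E : Type*} [Field F] [Field E] [Algebra F E] [IsGalois F E]
    {x : E} (hx : x ∉ Set.range (algebraMap F E)) : ∃ σ : E ≃ₐ[F] E, σ x ≠ x :=
  not_forall.mp ((InfiniteGalois.mem_range_algebraMap_iff_fixed x).not.mp hx)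

namespace AlgEquiv

variable {F E : Type*} [Field F] [Field E] [Algebra F E]

theorem div_self_pow_eq_one (σ : E ≃ₐ[F] E) {x : E} (hx : x ≠ 0) {n : ℕ}
    (hxn : σ (x ^ n) = x ^ n) : (σ x / x) ^ n = 1 := by
  rw [div_pow, ← map_pow, hxn, div_self (pow_ne_zero n hx)]

theorem isPrimitiveRoot_div_self (σ : E ≃ₐ[F] E) {x : E} (hx : x ≠ 0) {p : ℕ} (hp : p.Prime)
    (hxp : σ (x ^ p) = x ^ p) (hσx : σ x ≠ x) : IsPrimitiveRoot (σ x / x) p :=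
  .of_prime_of_pow_eq_one hp (σ.div_self_pow_eq_one hx hxp) (by rwa [Ne, div_eq_one_iff_eq hx])

theorem div_self_fixed_of_commute {σ τ : E ≃ₐ[F] E} (hστ : σ * τ = τ * σ) {x : E} (hx : x ≠ 0)
    (hσ : σ (τ x / x) = τ x / x) : τ (σ x / x) = σ x / x := by
  have hτx : τ x ≠ 0 := (map_ne_zero τ).mpr hx
  have hcomm : τ (σ x) = σ (τ x) := by simpa using congrArg (· x) hστ.symm
  have hστx : σ (τ x) = τ x / x * σ x := by rw [← hσ, ← map_mul, div_mul_cancel₀ _ hx]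
  rw [map_div₀, hcomm, hστx]
  field_simp

end AlgEquiv

theorem exists_isPrimitiveRoot_of_notMem_adjoin {F E : Type*} [Field F] [Field E] [Algebra F E]
    [IsGalois F E] (hab : ∀ σ τ : E ≃ₐ[F] E, σ * τ = τ * σ) {p : ℕ} (hp : p.Prime)
    {ζ : E} (hζ : IsPrimitiveRoot ζ p) {x : E} (hx : x ≠ 0)
    (hfix : ∀ σ : E ≃ₐ[F] E, σ (x ^ p) = x ^ p) (hxζ : x ∉ F⟮ζ⟯) :
    ∃ e : F, IsPrimitiveRoot e p := by
  have := NeZero.mk hp.ne_zero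
  obtain ⟨σ, hσ⟩ := exists_algEquiv_apply_ne (F := F⟮ζ⟯) (x := x) fun ⟨m, hm⟩ ↦ hxζ (hm ▸ m.2)
  set σ' := σ.restrictScalars F
  have hσζ (k : ℕ) : σ' (ζ ^ k) = ζ ^ k :=
    σ.commutes ⟨ζ ^ k, pow_mem (mem_adjoin_simple_self F ζ) k⟩
  have hεF : σ' x / x ∈ Set.range (algebraMap F E) := by
    rw [InfiniteGalois.mem_range_algebraMap_iff_fixed]
    intro τ
    refine AlgEquiv.div_self_fixed_of_commute (hab σ' τ) hx ?_
    obtain ⟨k, -, hk⟩ := hζ.eq_pow_of_pow_eq_one (τ.div_self_pow_eq_one hx (hfix τ))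
    rw [← hk, hσζ]
  obtain ⟨e, he⟩ := hεF
  have hε := σ'.isPrimitiveRoot_div_self hx hp (hfix σ') hσ
  exact ⟨e, (he ▸ hε).of_map_of_injective (algebraMap F E).injective⟩

theorem not_exists_pow_eq_self_of_finrank_eq_two {F E : Type*} [Field F] [CharZero F] [Field E]
    [Algebra F E] [IsGalois F E] (hF : finrank ℚ F = 2) {p : ℕ} (hp : p.Prime) (hp5 : 5 ≤ p)
    (hab : ∀ σ τ : E ≃ₐ[F] E, σ * τ = τ * σ) : ¬ ∃ x : E, x ^ p = p := by
  have : FiniteDimensional ℚ F := Module.finite_of_finrank_eq_succ hF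
  have : CharZero E := charZero_of_injective_algebraMap (algebraMap F E).injective
  rintro ⟨x, hx⟩
  have hx0 : x ≠ 0 := by
    rintro rfl
    rw [zero_pow hp.ne_zero] at hx
    exact hp.ne_zero (by exact_mod_cast hx.symm)
  have hfix (σ : E ≃ₐ[F] E) : σ (x ^ p) = x ^ p := by rw [hx, map_natCast]
  have hpF : ¬ p ∣ finrank ℚ F := fun h ↦ by
    have := Nat.le_of_dvd (by omega) h
    omega
  have hxF : x ∉ (⊥ : IntermediateField F E) :=
    notMem_of_pow_eq_self_of_not_dvd_finrank hp hpF (by simp [hp.ne_one]) hx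
  obtain ⟨σ₀, hσ₀⟩ := exists_algEquiv_apply_ne (mem_bot.not.mp hxF)
  have hζ := σ₀.isPrimitiveRoot_div_self hx0 hp (hfix σ₀) hσ₀
  generalize σ₀ x / x = ζ at hζ
  have : FiniteDimensional F F⟮ζ⟯ := adjoin.finiteDimensional (hζ.isIntegral hp.pos).tower_top
  have hxζ : x ∉ F⟮ζ⟯ := by
    have hpos : 0 < finrank F F⟮ζ⟯ := Module.finrank_pos
    have hlt := (hζ.finrank_adjoin_le_totient (F := F) hp.pos).trans_lt (Nat.totient_lt p hp.one_lt)
    exact notMem_of_pow_eq_self_of_not_dvd_finrank hp hpF (Nat.not_dvd_of_pos_of_lt hpos hlt) hx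
  obtain ⟨e, he⟩ := exists_isPrimitiveRoot_of_notMem_adjoin hab hp hζ hx0 hfix hxζ
  have := he.totient_le_finrank_rat hp.pos
  rw [Nat.totient_prime hp, hF] at this
  omega

theorem stmt7_general
    -- `K` is an imaginary quadratic field, viewed as a subfield of `ℂ`
    (K : Subfield ℂ)
    (hquad : Module.finrank ℚ ↥K = 2)
    -- `p ≥ 5` is a prime that splits in `K`
    (p : ℕ) (hp : p.Prime) (hp5 : 5 ≤ p)
    -- `L` is an intermediate field `K ⊆ L ⊆ ℂ` such that `L/K` is Galois with abelian
    -- Galois group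
    (L : IntermediateField ↥K ℂ) [IsGalois ↥K ↥L]
    (hab : ∀ σ τ : ↥L ≃ₐ[↥K] ↥L, σ * τ = τ * σ) :
    -- then no element of `L` is a `p`-th root of `p`
    ¬ ∃ x : ↥L, x ^ p = (p : ↥L) :=
  not_exists_pow_eq_self_of_finrank_eq_two hquad hp hp5 hab

theorem stmt7
    -- `K` is an imaginary quadratic field, viewed as a subfield of `ℂ`
    (K : Subfield ℂ) [FiniteDimensional ℚ ↥K]
    (hquad : Module.finrank ℚ ↥K = 2)
    (him : ∃ z : ↥K, (z : ℂ).im ≠ 0)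
    -- `p ≥ 5` is a prime that splits in `K`
    (p : ℕ) (hp : p.Prime) (hp5 : 5 ≤ p)
    (hsplit : ∃ P Q : Ideal (NumberField.RingOfIntegers ↥K), P.IsPrime ∧ Q.IsPrime ∧
      P ≠ Q ∧ P * Q = Ideal.span {(p : NumberField.RingOfIntegers ↥K)})
    -- `L` is an intermediate field `K ⊆ L ⊆ ℂ` such that `L/K` is Galois with abelian
    -- Galois group
    (L : IntermediateField ↥K ℂ) [IsGalois ↥K ↥L]
    (hab : ∀ σ τ : ↥L ≃ₐ[↥K] ↥L, σ * τ = τ * σ) :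
    -- then no element of `L` is a `p`-th root of `p`
    ¬ ∃ x : ↥L, x ^ p = (p : ↥L) :=
  stmt7_general K hquad p hp hp5 L hab
end
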